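/- arXiv:2104.03052 — 3 statements merged into one kernel-verified Lean document; each statement's English description precedes it below -/
import Mathlib

section
/- BIL-formulas are preserved under bi-asimulations: if (M₁,w₁) and (M₂,w₂) are pointed Θ-models and A is a bi-asimulation from (M₁,w₁) to (M₂,w₂), then every BIL(Θ)-formula true at (M₁,w₁) is true at (M₂,w₂), i.e. Th⁺_BIL(M₁,w₁) ⊆ Th⁺_BIL(M₂,w₂). -/
/-! Common vocabulary for bi-intuitionistic propositional logic (BIL),
Kripke models, bi-asimulations, abstract bi-intuitionistic logics and
bi-unravellings, following Olkhovikov & Badia,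
"Maximality of bi-intuitionistic propositional logic". -/

/-- Formulas of bi-intuitionistic propositional logic over the type `A` of
propositional letters. -/
inductive BILForm (A : Type) : Type
  | bot : BILForm A
  | atom : A → BILForm A
  | conj : BILForm A → BILForm A → BILForm A
  | disj : BILForm A → BILForm A → BILForm A
  | impl : BILForm A → BILForm A → BILForm A
  | coimpl : BILForm A → BILForm A → BILForm A

namespace BILForm

/-- The propositional letters occurring in a formula; a formula belongs to
`BIL(Θ)` iff its letters are contained in `Θ`. -/
def letters {A : Type} : BILForm A → Set A
  | bot => ∅
  | atom p => {p}
  | conj φ ψ => letters φ ∪ letters ψ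
  | disj φ ψ => letters φ ∪ letters ψ
  | impl φ ψ => letters φ ∪ letters ψ
  | coimpl φ ψ => letters φ ∪ letters ψ

end BILForm

/-- A (bi-intuitionistic) Kripke model with propositional letters `A`,
carried on the subset `dom` of the type `Ω`: a nonempty set of worlds,
partially ordered by `rel`, together with a monotone valuation. -/
structure SKModel (A : Type) (Ω : Type) : Type where
  dom : Set Ω
  nonempty : dom.Nonempty
  rel : Ω → Ω → Prop
  rel_mem : ∀ {u v}, rel u v → u ∈ dom ∧ v ∈ dom
  rel_refl : ∀ u ∈ dom, rel u u
  rel_trans : ∀ {u v w}, rel u v → rel v w → rel u w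
  rel_antisymm : ∀ {u v}, rel u v → rel v u → u = v
  val : A → Set Ω
  val_mem : ∀ p, val p ⊆ dom
  val_mono : ∀ (p : A) {u v}, rel u v → u ∈ val p → v ∈ val p

/-- Kripke satisfaction for bi-intuitionistic formulas. -/
def BILSat {A Ω : Type} (M : SKModel A Ω) : BILForm A → Ω → Prop
  | .bot, _ => False
  | .atom p, w => w ∈ M.val p
  | .conj φ ψ, w => BILSat M φ w ∧ BILSat M ψ w
  | .disj φ ψ, w => BILSat M φ w ∨ BILSat M ψ w
  | .impl φ ψ, w => ∀ v, M.rel w v → BILSat M φ v → BILSat M ψ v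
  | .coimpl φ ψ, w => ∃ v, M.rel v w ∧ BILSat M φ v ∧ ¬ BILSat M ψ v

/-- `(Γ, Δ)` is satisfied at `(M, w)`: all of `Γ` true, all of `Δ` false. -/
def BILSatTh {A Ω : Type} (M : SKModel A Ω) (w : Ω) (Γ Δ : Set (BILForm A)) : Prop :=
  (∀ φ ∈ Γ, BILSat M φ w) ∧ (∀ φ ∈ Δ, ¬ BILSat M φ w)

/-- `Th⁺_BIL(M₁,w₁) ⊆ Th⁺_BIL(M₂,w₂)` over the signature `Θ`. -/
def BILThPosSubset {A Ω₁ Ω₂ : Type} (Θ : Set A) (M₁ : SKModel A Ω₁) (w₁ : Ω₁)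
    (M₂ : SKModel A Ω₂) (w₂ : Ω₂) : Prop :=
  ∀ φ : BILForm A, φ.letters ⊆ Θ → BILSat M₁ φ w₁ → BILSat M₂ φ w₂

/-- `Th_BIL(M₁,w₁) = Th_BIL(M₂,w₂)` over the signature `Θ`. -/
def BILThEq {A Ω₁ Ω₂ : Type} (Θ : Set A) (M₁ : SKModel A Ω₁) (w₁ : Ω₁)
    (M₂ : SKModel A Ω₂) (w₂ : Ω₂) : Prop :=
  ∀ φ : BILForm A, φ.letters ⊆ Θ → (BILSat M₁ φ w₁ ↔ BILSat M₂ φ w₂)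

/-- A bi-asimulation (over the signature `Θ`) from `(M₁,w₁)` to `(M₂,w₂)`,
given by its two components `R ⊆ W₁ × W₂` and `S ⊆ W₂ × W₁`. -/
structure IsBiAsim {A Ω₁ Ω₂ : Type} (Θ : Set A) (M₁ : SKModel A Ω₁) (M₂ : SKModel A Ω₂)
    (w₁ : Ω₁) (w₂ : Ω₂) (R : Ω₁ → Ω₂ → Prop) (S : Ω₂ → Ω₁ → Prop) : Prop where
  memR : ∀ {v s}, R v s → v ∈ M₁.dom ∧ s ∈ M₂.dom
  memS : ∀ {v s}, S v s → v ∈ M₂.dom ∧ s ∈ M₁.dom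
  elem : R w₁ w₂
  atomR : ∀ p ∈ Θ, ∀ {v s}, R v s → v ∈ M₁.val p → s ∈ M₂.val p
  atomS : ∀ p ∈ Θ, ∀ {v s}, S v s → v ∈ M₂.val p → s ∈ M₁.val p
  backR : ∀ {v s t}, R v s → M₂.rel s t → ∃ u, M₁.rel v u ∧ S t u ∧ R u t
  backS : ∀ {v s t}, S v s → M₁.rel s t → ∃ u, M₂.rel v u ∧ R t u ∧ S u t
  forthR : ∀ {v s u}, R v s → M₁.rel u v → ∃ t, M₂.rel t s ∧ S t u ∧ R u t
  forthS : ∀ {v s u}, S v s → M₂.rel u v → ∃ t, M₁.rel t s ∧ R t u ∧ S u t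

/-- `M` is a submodel of `N`. -/
def Submodel {A Ω : Type} (M N : SKModel A Ω) : Prop :=
  M.dom ⊆ N.dom ∧ (∀ u ∈ M.dom, ∀ v ∈ M.dom, (M.rel u v ↔ N.rel u v)) ∧
    ∀ p, M.val p = N.val p ∩ M.dom

/-- `U` is the union of the countable chain `Mc` of models. -/
def IsUnionOfChain {A Ω : Type} (Mc : ℕ → SKModel A Ω) (U : SKModel A Ω) : Prop :=
  U.dom = ⋃ n, (Mc n).dom ∧ (∀ u v, U.rel u v ↔ ∃ n, (Mc n).rel u v) ∧
    ∀ p, U.val p = ⋃ n, (Mc n).val p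

/-- `N'` has the same frame as `N` and the same valuation on the letters in
`Θ` (this expresses both `Σ`-expansions and `Σ`-reducts). -/
def IsExpansion {A Ω : Type} (Θ : Set A) (N N' : SKModel A Ω) : Prop :=
  N'.dom = N.dom ∧ (∀ u v, N'.rel u v ↔ N.rel u v) ∧ ∀ p ∈ Θ, N'.val p = N.val p

/-- `M ≼_BIL N` over the signature `Θ`. -/
def BILElemSub {A Ω : Type} (Θ : Set A) (M N : SKModel A Ω) : Prop :=
  Submodel M N ∧ ∀ w ∈ M.dom, ∀ φ : BILForm A, φ.letters ⊆ Θ →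
    (BILSat M φ w ↔ BILSat N φ w)

/-- `(Γ,Δ)` is a successor BIL-type of `(M,v)` (over the signature `Θ`). -/
def BILSuccType {A Ω : Type} (Θ : Set A) (M : SKModel A Ω) (v : Ω)
    (Γ Δ : Set (BILForm A)) : Prop :=
  (∀ φ ∈ Γ, BILForm.letters φ ⊆ Θ) ∧ (∀ φ ∈ Δ, BILForm.letters φ ⊆ Θ) ∧
    ∀ Γ' ⊆ Γ, ∀ Δ' ⊆ Δ, Γ'.Finite → Δ'.Finite →
      ∃ u, M.rel v u ∧ BILSatTh M u Γ' Δ'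

/-- `(Γ,Δ)` is a predecessor BIL-type of `(M,v)` (over the signature `Θ`). -/
def BILPredType {A Ω : Type} (Θ : Set A) (M : SKModel A Ω) (v : Ω)
    (Γ Δ : Set (BILForm A)) : Prop :=
  (∀ φ ∈ Γ, BILForm.letters φ ⊆ Θ) ∧ (∀ φ ∈ Δ, BILForm.letters φ ⊆ Θ) ∧
    ∀ Γ' ⊆ Γ, ∀ Δ' ⊆ Δ, Γ'.Finite → Δ'.Finite →
      ∃ u, M.rel u v ∧ BILSatTh M u Γ' Δ'

/-- `M` is BIL-saturated (over the signature `Θ`): it realizes all of its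
successor and predecessor BIL-types. -/
def BILSaturated {A Ω : Type} (Θ : Set A) (M : SKModel A Ω) : Prop :=
  ∀ v ∈ M.dom, ∀ Γ Δ : Set (BILForm A),
    (BILSuccType Θ M v Γ Δ → ∃ u, M.rel v u ∧ BILSatTh M u Γ Δ) ∧
    (BILPredType Θ M v Γ Δ → ∃ u, M.rel u v ∧ BILSatTh M u Γ Δ)

/-- An isomorphism `g` of Kripke `Θ`-models from `M` onto `N`. -/
def BILIso {A Ω₁ Ω₂ : Type} (Θ : Set A) (M : SKModel A Ω₁) (N : SKModel A Ω₂)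
    (g : Ω₁ → Ω₂) : Prop :=
  Set.InjOn g M.dom ∧ g '' M.dom = N.dom ∧
  (∀ u ∈ M.dom, ∀ v ∈ M.dom, (M.rel u v ↔ N.rel (g u) (g v))) ∧
  (∀ p ∈ Θ, ∀ u ∈ M.dom, (u ∈ M.val p ↔ g u ∈ N.val p))

/-- An abstract bi-intuitionistic logic over the propositional letters `A`:
a set `In Θ` of `Θ`-formulas for every signature `Θ ⊆ A`, and a satisfaction
relation enjoying the Isomorphism, Expansion, Occurrence and Closure
properties. -/
structure AbsLogic (A : Type) : Type 1 where
  F : Type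
  In : Set A → Set F
  Sat : ∀ {Ω : Type}, SKModel A Ω → Ω → F → Prop
  in_mono : ∀ {Θ Θ' : Set A}, Θ ⊆ Θ' → In Θ ⊆ In Θ'
  iso_invariant : ∀ (Θ : Set A) {Ω₁ Ω₂ : Type} (M : SKModel A Ω₁) (N : SKModel A Ω₂)
      (g : Ω₁ → Ω₂), BILIso Θ M N g →
      ∀ φ ∈ In Θ, ∀ w ∈ M.dom, (Sat M w φ ↔ Sat N (g w) φ)
  expansion : ∀ (Θ : Set A) {Ω : Type} (M M' : SKModel A Ω), M.dom = M'.dom →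
      (∀ u v, M.rel u v ↔ M'.rel u v) → (∀ p ∈ Θ, M.val p = M'.val p) →
      ∀ φ ∈ In Θ, ∀ w, (Sat M w φ ↔ Sat M' w φ)
  occurrence : ∀ (Θ : Set A) (φ : F), φ ∈ In Θ →
      ∃ Θ₀ : Set A, Θ₀.Finite ∧ Θ₀ ⊆ Θ ∧ φ ∈ In Θ₀
  fbot : F
  fconj : F → F → F
  fdisj : F → F → F
  fimpl : F → F → F
  fcoimpl : F → F → F
  mem_bot : ∀ Θ, fbot ∈ In Θ
  mem_conj : ∀ {Θ φ ψ}, φ ∈ In Θ → ψ ∈ In Θ → fconj φ ψ ∈ In Θ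
  mem_disj : ∀ {Θ φ ψ}, φ ∈ In Θ → ψ ∈ In Θ → fdisj φ ψ ∈ In Θ
  mem_impl : ∀ {Θ φ ψ}, φ ∈ In Θ → ψ ∈ In Θ → fimpl φ ψ ∈ In Θ
  mem_coimpl : ∀ {Θ φ ψ}, φ ∈ In Θ → ψ ∈ In Θ → fcoimpl φ ψ ∈ In Θ
  sat_bot : ∀ {Ω : Type} (M : SKModel A Ω) (w : Ω), ¬ Sat M w fbot
  sat_conj : ∀ {Ω : Type} (M : SKModel A Ω) (w : Ω) (φ ψ : F),
      Sat M w (fconj φ ψ) ↔ (Sat M w φ ∧ Sat M w ψ)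
  sat_disj : ∀ {Ω : Type} (M : SKModel A Ω) (w : Ω) (φ ψ : F),
      Sat M w (fdisj φ ψ) ↔ (Sat M w φ ∨ Sat M w ψ)
  sat_impl : ∀ {Ω : Type} (M : SKModel A Ω) (w : Ω) (φ ψ : F),
      Sat M w (fimpl φ ψ) ↔ ∀ v, M.rel w v → Sat M v φ → Sat M v ψ
  sat_coimpl : ∀ {Ω : Type} (M : SKModel A Ω) (w : Ω) (φ ψ : F),
      Sat M w (fcoimpl φ ψ) ↔ ∃ v, M.rel v w ∧ Sat M v φ ∧ ¬ Sat M v ψ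

namespace AbsLogic

variable {A : Type}

/-- The `L`-theory `(Γ,Δ)` is satisfied at `(M,w)`. -/
def SatTh (L : AbsLogic A) {Ω : Type} (M : SKModel A Ω) (w : Ω) (Γ Δ : Set L.F) : Prop :=
  (∀ φ ∈ Γ, L.Sat M w φ) ∧ (∀ φ ∈ Δ, ¬ L.Sat M w φ)

/-- `Th⁺_L(M₁,w₁) ⊆ Th⁺_L(M₂,w₂)` over the signature `Θ`. -/
def ThPosSubset (L : AbsLogic A) (Θ : Set A) {Ω₁ Ω₂ : Type} (M₁ : SKModel A Ω₁) (w₁ : Ω₁)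
    (M₂ : SKModel A Ω₂) (w₂ : Ω₂) : Prop :=
  ∀ φ ∈ L.In Θ, L.Sat M₁ w₁ φ → L.Sat M₂ w₂ φ

/-- `Th_L(M₁,w₁) = Th_L(M₂,w₂)` over the signature `Θ`. -/
def ThEq (L : AbsLogic A) (Θ : Set A) {Ω₁ Ω₂ : Type} (M₁ : SKModel A Ω₁) (w₁ : Ω₁)
    (M₂ : SKModel A Ω₂) (w₂ : Ω₂) : Prop :=
  ∀ φ ∈ L.In Θ, (L.Sat M₁ w₁ φ ↔ L.Sat M₂ w₂ φ)

/-- `L` is preserved under bi-asimulations. -/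
def Preserved (L : AbsLogic A) : Prop :=
  ∀ (Θ : Set A) (Ω₁ Ω₂ : Type) (M₁ : SKModel A Ω₁) (M₂ : SKModel A Ω₂)
    (w₁ : Ω₁) (w₂ : Ω₂) (R : Ω₁ → Ω₂ → Prop) (S : Ω₂ → Ω₁ → Prop),
    IsBiAsim Θ M₁ M₂ w₁ w₂ R S → L.ThPosSubset Θ M₁ w₁ M₂ w₂

/-- `L` is ★-compact. -/
def StarCompact (L : AbsLogic A) : Prop :=
  ∀ (Θ : Set A) (Γ Δ : Set L.F), Γ ⊆ L.In Θ → Δ ⊆ L.In Θ →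
    (∀ Γ' ⊆ Γ, ∀ Δ' ⊆ Δ, Γ'.Finite → Δ'.Finite →
      ∃ (Ω : Type) (M : SKModel A Ω) (w : Ω), w ∈ M.dom ∧ L.SatTh M w Γ' Δ') →
    ∃ (Ω : Type) (M : SKModel A Ω) (w : Ω), w ∈ M.dom ∧ L.SatTh M w Γ Δ

/-- `M ≼_L N` over the signature `Θ`. -/
def ElemSub (L : AbsLogic A) (Θ : Set A) {Ω : Type} (M N : SKModel A Ω) : Prop :=
  Submodel M N ∧ ∀ w ∈ M.dom, ∀ φ ∈ L.In Θ, (L.Sat M w φ ↔ L.Sat N w φ)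

/-- `L` has the Tarski Union Property. -/
def HasTUP (L : AbsLogic A) : Prop :=
  ∀ (Θ : Set A) (Ω : Type) (Mc : ℕ → SKModel A Ω),
    (∀ n, L.ElemSub Θ (Mc n) (Mc (n + 1))) →
    ∀ U : SKModel A Ω, IsUnionOfChain Mc U → ∀ n, L.ElemSub Θ (Mc n) U

/-- `(Γ,Δ)` is a successor `L`-type of `(M,v)` (over the signature `Θ`). -/
def SuccType (L : AbsLogic A) (Θ : Set A) {Ω : Type} (M : SKModel A Ω) (v : Ω)
    (Γ Δ : Set L.F) : Prop :=
  Γ ⊆ L.In Θ ∧ Δ ⊆ L.In Θ ∧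
    ∀ Γ' ⊆ Γ, ∀ Δ' ⊆ Δ, Γ'.Finite → Δ'.Finite →
      ∃ u, M.rel v u ∧ L.SatTh M u Γ' Δ'

/-- `(Γ,Δ)` is a predecessor `L`-type of `(M,v)` (over the signature `Θ`). -/
def PredType (L : AbsLogic A) (Θ : Set A) {Ω : Type} (M : SKModel A Ω) (v : Ω)
    (Γ Δ : Set L.F) : Prop :=
  Γ ⊆ L.In Θ ∧ Δ ⊆ L.In Θ ∧
    ∀ Γ' ⊆ Γ, ∀ Δ' ⊆ Δ, Γ'.Finite → Δ'.Finite →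
      ∃ u, M.rel u v ∧ L.SatTh M u Γ' Δ'

/-- `M` is `L`-saturated (over the signature `Θ`). -/
def Saturated (L : AbsLogic A) (Θ : Set A) {Ω : Type} (M : SKModel A Ω) : Prop :=
  ∀ v ∈ M.dom, ∀ Γ Δ : Set L.F,
    (L.SuccType Θ M v Γ Δ → ∃ u, M.rel v u ∧ L.SatTh M u Γ Δ) ∧
    (L.PredType Θ M v Γ Δ → ∃ u, M.rel u v ∧ L.SatTh M u Γ Δ)

/-- An `L`-elementary embedding of `M` into `N` (over the signature `Θ`). -/
def ElemEmbedding (L : AbsLogic A) (Θ : Set A) {Ω₁ Ω₂ : Type}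
    (M : SKModel A Ω₁) (N : SKModel A Ω₂) (f : Ω₁ → Ω₂) : Prop :=
  Set.InjOn f M.dom ∧ Set.MapsTo f M.dom N.dom ∧
  (∀ u ∈ M.dom, ∀ v ∈ M.dom, (M.rel u v ↔ N.rel (f u) (f v))) ∧
  (∀ u ∈ M.dom, ∀ φ ∈ L.In Θ, (L.Sat M u φ ↔ L.Sat N (f u) φ))

end AbsLogic

/-- An abstract bi-intuitionistic logic extending `BIL`: bi-intuitionistic
formulas are present in it in their usual form and with their usual meaning. -/
structure BILExtension (A : Type) extends AbsLogic A where
  ofBIL : BILForm A → F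
  ofBIL_mem : ∀ (Θ : Set A) (φ : BILForm A), φ.letters ⊆ Θ → ofBIL φ ∈ In Θ
  ofBIL_bot : ofBIL .bot = fbot
  ofBIL_conj : ∀ φ ψ, ofBIL (.conj φ ψ) = fconj (ofBIL φ) (ofBIL ψ)
  ofBIL_disj : ∀ φ ψ, ofBIL (.disj φ ψ) = fdisj (ofBIL φ) (ofBIL ψ)
  ofBIL_impl : ∀ φ ψ, ofBIL (.impl φ ψ) = fimpl (ofBIL φ) (ofBIL ψ)
  ofBIL_coimpl : ∀ φ ψ, ofBIL (.coimpl φ ψ) = fcoimpl (ofBIL φ) (ofBIL ψ)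
  sat_ofBIL : ∀ {Ω : Type} (M : SKModel A Ω) (w : Ω) (φ : BILForm A),
      Sat M w (ofBIL φ) ↔ BILSat M φ w

/-! ### Bi-unravellings -/

/-- The universe `W^un_w` of the bi-unravelling of `M` around `w`: finite
nonempty sequences starting at `w` whose consecutive elements are
`≺`- or `≻`-related and distinct. -/
def unravDom {A Ω : Type} (M : SKModel A Ω) (w : Ω) : Set (List Ω) :=
  {l | l ≠ [] ∧ l.head? = some w ∧ (∀ x ∈ l, x ∈ M.dom) ∧
    l.Chain' (fun u v => (M.rel u v ∨ M.rel v u) ∧ u ≠ v)}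

/-- The one-step relation `ρ^un_w` of the bi-unravelling. -/
def unravStep {A Ω : Type} (M : SKModel A Ω) (w : Ω) (s t : List Ω) : Prop :=
  s ∈ unravDom M w ∧ t ∈ unravDom M w ∧
    ((∃ x y, s.getLast? = some y ∧ t = s ++ [x] ∧ M.rel y x) ∨
     (∃ x y, t.getLast? = some y ∧ s = t ++ [x] ∧ M.rel x y))

/-- The accessibility relation `≺^un_w` of the bi-unravelling: the reflexive
and transitive closure of `ρ^un_w`. -/
def unravRel {A Ω : Type} (M : SKModel A Ω) (w : Ω) : List Ω → List Ω → Prop :=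
  Relation.ReflTransGen (unravStep M w)

/-- The valuation `V^un_w` of the bi-unravelling: a sequence satisfies a
letter iff its last element does. -/
def unravVal {A Ω : Type} (M : SKModel A Ω) (w : Ω) (p : A) : Set (List Ω) :=
  {l | l ∈ unravDom M w ∧ ∃ y, l.getLast? = some y ∧ y ∈ M.val p}

/-- `U` is (a presentation of) the bi-unravelling `M^un_w` of `M` around `w`. -/
def IsUnravelling {A Ω : Type} (M : SKModel A Ω) (w : Ω) (U : SKModel A (List Ω)) : Prop :=
  U.dom = unravDom M w ∧
  (∀ α β, U.rel α β ↔ (α ∈ unravDom M w ∧ β ∈ unravDom M w ∧ unravRel M w α β)) ∧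
  (∀ p, U.val p = unravVal M w p)

/-- `M` is a bi-unravelled model presented in the canonical form: its frame is
literally the bi-unravelling frame of `M₀` around `w₀` (the valuation of `M`
is arbitrary). -/
def IsBiUnravelledForm {A Ω : Type} (M₀ : SKModel A Ω) (w₀ : Ω)
    (M : SKModel A (List Ω)) : Prop :=
  M.dom = unravDom M₀ w₀ ∧
  (∀ α β, M.rel α β ↔ (α ∈ unravDom M₀ w₀ ∧ β ∈ unravDom M₀ w₀ ∧ unravRel M₀ w₀ α β))

/-- `(N,v)` is a bi-unravelled pointed model: its underlying frame is
isomorphic, via a point-preserving order-respecting bijection, to the frame of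
some bi-unravelling. -/
def IsBiUnravelled {A Ω' : Type} (N : SKModel A Ω') (v : Ω') : Prop :=
  ∃ (Ω₀ : Type) (M₀ : SKModel A Ω₀) (w₀ : Ω₀), w₀ ∈ M₀.dom ∧
    ∃ g : Ω' → List Ω₀, Set.InjOn g N.dom ∧ g '' N.dom = unravDom M₀ w₀ ∧ g v = [w₀] ∧
      ∀ x ∈ N.dom, ∀ y ∈ N.dom, (N.rel x y ↔ unravRel M₀ w₀ (g x) (g y))

/-- `qp` and `qm` provide the fresh letters `q⁺_α`, `q⁻_α` (for `α ∈ D`)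
used to form the signature `Θ_M`. -/
def FreshLetters {A Ω : Type} (Θ : Set A) (D : Set Ω) (qp qm : Ω → A) : Prop :=
  Set.InjOn qp D ∧ Set.InjOn qm D ∧
  (∀ α ∈ D, qp α ∉ Θ) ∧ (∀ α ∈ D, qm α ∉ Θ) ∧
  (∀ α ∈ D, ∀ β ∈ D, qp α ≠ qm β)

/-- The signature `Θ_M = Θ ∪ {q⁺_α, q⁻_α : α ∈ D}`. -/
def bracketSig {A Ω : Type} (Θ : Set A) (D : Set Ω) (qp qm : Ω → A) : Set A :=
  Θ ∪ qp '' D ∪ qm '' D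

/-- `Mb` is the model `[M]`: same frame as `M`, same valuation on `Θ`, and
`β ∈ [V](q⁺_α) ↔ α ≺ β`, `β ∉ [V](q⁻_α) ↔ β ≺ α`. -/
def IsBracket {A Ω : Type} (Θ : Set A) (qp qm : Ω → A) (M Mb : SKModel A Ω) : Prop :=
  Mb.dom = M.dom ∧ (∀ u v, Mb.rel u v ↔ M.rel u v) ∧
  (∀ p ∈ Θ, Mb.val p = M.val p) ∧
  (∀ α ∈ M.dom, Mb.val (qp α) = {β | M.rel α β}) ∧
  (∀ α ∈ M.dom, Mb.val (qm α) = {β | β ∈ M.dom ∧ ¬ M.rel β α})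

/-! ### Formula schemas -/

/-- Binary formula schemas: expressions built from two placeholders and
propositional letters by `→` and `≪`. -/
inductive BILSchema (A : Type) : Type
  | v1 : BILSchema A
  | v2 : BILSchema A
  | atom : A → BILSchema A
  | impl : BILSchema A → BILSchema A → BILSchema A
  | coimpl : BILSchema A → BILSchema A → BILSchema A

namespace BILSchema

/-- The letters occurring in a schema. -/
def letters {A : Type} : BILSchema A → Set A
  | v1 => ∅
  | v2 => ∅
  | atom p => {p}
  | impl s t => letters s ∪ letters t
  | coimpl s t => letters s ∪ letters t

/-- Evaluation of a schema in an abstract logic `L` extending `BIL`, on a pair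
of `L`-formulas. -/
def eval {A : Type} (L : BILExtension A) : BILSchema A → L.F → L.F → L.F
  | v1, α, _ => α
  | v2, _, β => β
  | atom p, _, _ => L.ofBIL (.atom p)
  | impl s t, α, β => L.fimpl (eval L s α β) (eval L t α β)
  | coimpl s t, α, β => L.fcoimpl (eval L s α β) (eval L t α β)

end BILSchema

/-- `signSat b P` says that `P` holds if the sign `b` is `+` (`true`), and
that `P` fails if the sign is `−` (`false`). -/
def signSat (b : Bool) (P : Prop) : Prop := if b then P else ¬ P

/-- Iterated conjunction, with `⋀ ∅ := ⊥ → ⊥`. -/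
def bigConj {A : Type} : List (BILForm A) → BILForm A
  | [] => .impl .bot .bot
  | φ :: l => .conj φ (bigConj l)

/-- Iterated disjunction, with `⋁ ∅ := ⊥`. -/
def bigDisj {A : Type} : List (BILForm A) → BILForm A
  | [] => .bot
  | φ :: l => .disj φ (bigDisj l)

/-- `N` realizes (over the signature `Θ`) every BIL-type of its submodel `M`. -/
def BILRealizesTypesIn {A Ω : Type} (Θ : Set A) (M N : SKModel A Ω) : Prop :=
  ∀ v ∈ M.dom, ∀ Γ Δ : Set (BILForm A),
    (BILSuccType Θ M v Γ Δ → ∃ u, N.rel v u ∧ BILSatTh N u Γ Δ) ∧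
    (BILPredType Θ M v Γ Δ → ∃ u, N.rel u v ∧ BILSatTh N u Γ Δ)

/-! Read backwards along its second component, a bi-asimulation is again one (`symm`), so the
induction on formulas needs only the forward direction: the antecedent of `→` and the
consequent of `≪` are transported backwards. -/

namespace IsBiAsim

variable {A Ω₁ Ω₂ : Type} {Θ : Set A} {M₁ : SKModel A Ω₁} {M₂ : SKModel A Ω₂}
  {w₁ : Ω₁} {w₂ : Ω₂} {R : Ω₁ → Ω₂ → Prop} {S : Ω₂ → Ω₁ → Prop}

theorem repoint (h : IsBiAsim Θ M₁ M₂ w₁ w₂ R S) {v : Ω₁} {s : Ω₂} (hvs : R v s) :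
    IsBiAsim Θ M₁ M₂ v s R S :=
  { h with elem := hvs }

theorem symm (h : IsBiAsim Θ M₁ M₂ w₁ w₂ R S) {t : Ω₂} {u : Ω₁} (htu : S t u) :
    IsBiAsim Θ M₂ M₁ t u S R where
  memR := h.memS
  memS := h.memR
  elem := htu
  atomR := h.atomS
  atomS := h.atomR
  backR := h.backS
  backS := h.backR
  forthR := h.forthS
  forthS := h.forthR

theorem bilSat {φ : BILForm A} (hφ : φ.letters ⊆ Θ) (h : IsBiAsim Θ M₁ M₂ w₁ w₂ R S)
    (hw : BILSat M₁ φ w₁) : BILSat M₂ φ w₂ := by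
  induction φ generalizing Ω₁ Ω₂ M₁ M₂ w₁ w₂ R S with
  | bot => exact hw
  | atom p => exact h.atomR p (hφ rfl) h.elem hw
  | conj φ ψ ihφ ihψ =>
    obtain ⟨hφ, hψ⟩ := Set.union_subset_iff.mp hφ
    exact ⟨ihφ hφ h hw.1, ihψ hψ h hw.2⟩
  | disj φ ψ ihφ ihψ =>
    obtain ⟨hφ, hψ⟩ := Set.union_subset_iff.mp hφ
    exact hw.imp (ihφ hφ h) (ihψ hψ h)
  | impl φ ψ ihφ ihψ =>
    obtain ⟨hφ, hψ⟩ := Set.union_subset_iff.mp hφ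
    intro t hw₂t hφt
    obtain ⟨u, hw₁u, hSt, hRu⟩ := h.backR h.elem hw₂t
    exact ihψ hψ (h.repoint hRu) (hw u hw₁u (ihφ hφ (h.symm hSt) hφt))
  | coimpl φ ψ ihφ ihψ =>
    obtain ⟨hφ, hψ⟩ := Set.union_subset_iff.mp hφ
    obtain ⟨u, huw₁, hφu, hψu⟩ := hw
    obtain ⟨t, htw₂, hSt, hRu⟩ := h.forthR h.elem huw₁
    exact ⟨t, htw₂, ihφ hφ (h.repoint hRu) hφu, fun hψt => hψu (ihψ hψ (h.symm hSt) hψt)⟩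

end IsBiAsim

/-- BIL-formulas are preserved under bi-asimulations: if
`A'` is a bi-asimulation from `(M₁,w₁)` to `(M₂,w₂)` over the signature `Θ`,
then `Th⁺_BIL(M₁,w₁) ⊆ Th⁺_BIL(M₂,w₂)`. -/
theorem bil_preservation (A : Type) (Θ : Set A) (Ω₁ Ω₂ : Type)
    (M₁ : SKModel A Ω₁) (M₂ : SKModel A Ω₂) (w₁ : Ω₁) (w₂ : Ω₂)
    (R : Ω₁ → Ω₂ → Prop) (S : Ω₂ → Ω₁ → Prop)
    (hasim : IsBiAsim Θ M₁ M₂ w₁ w₂ R S) :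
    ∀ φ : BILForm A, φ.letters ⊆ Θ → BILSat M₁ φ w₁ → BILSat M₂ φ w₂ :=
  fun _ hφ => hasim.bilSat hφ
end

section
/- BIL has the Tarski Union Property: if M₀ ≼_BIL M₁ ≼_BIL … ≼_BIL Mₙ ≼_BIL … is a countable BIL-elementary chain of Θ-models, then Mₙ ≼_BIL ∪_{k∈ω} M_k for all n; in particular, for every φ ∈ BIL(Θ), every n ∈ ω and every w ∈ Wₙ, Mₙ,w ⊨_BIL φ iff ∪_{k∈ω}M_k, w ⊨_BIL φ. -/
/-! Truth of a formula at `w ∈ Wₙ` is transferred between `Mₙ` and the union by induction on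
the formula. Only `→` and `≪` need an argument: a successor (predecessor) of `w` in the union is
already one in some later `Mₘ`, and `Mₙ ≼_BIL Mₘ` moves the truth value at `w` from `Mₙ` to `Mₘ`. -/

namespace Submodel

variable {A Ω : Type} {M N K : SKModel A Ω}

lemma refl (M : SKModel A Ω) : Submodel M M :=
  ⟨subset_rfl, fun _ _ _ _ => Iff.rfl, fun p => (Set.inter_eq_left.mpr (M.val_mem p)).symm⟩

lemma trans (hMN : Submodel M N) (hNK : Submodel N K) : Submodel M K := by
  obtain ⟨hdom, hrel, hval⟩ := hMN
  obtain ⟨hdom', hrel', hval'⟩ := hNK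
  refine ⟨hdom.trans hdom', fun u hu v hv => (hrel u hu v hv).trans
    (hrel' u (hdom hu) v (hdom hv)), fun p => ?_⟩
  rw [hval, hval', Set.inter_assoc, Set.inter_eq_right.mpr hdom]

lemma rel_of_rel (h : Submodel M N) {u v : Ω} (huv : M.rel u v) : N.rel u v :=
  (h.2.1 u (M.rel_mem huv).1 v (M.rel_mem huv).2).mp huv

lemma mem_val_iff (h : Submodel M N) {w : Ω} (hw : w ∈ M.dom) (p : A) :
    w ∈ M.val p ↔ w ∈ N.val p := by
  rw [h.2.2 p, Set.mem_inter_iff, and_iff_left hw]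

lemma of_chain {Mc : ℕ → SKModel A Ω} (hchain : ∀ n, Submodel (Mc n) (Mc (n + 1)))
    {m n : ℕ} (hmn : m ≤ n) : Submodel (Mc m) (Mc n) := by
  induction n, hmn using Nat.le_induction with
  | base => exact refl _
  | succ n _ ih => exact ih.trans (hchain n)

end Submodel

namespace BILElemSub

variable {A Ω : Type} {Θ : Set A} {M N K : SKModel A Ω}

lemma refl (M : SKModel A Ω) : BILElemSub Θ M M :=
  ⟨Submodel.refl M, fun _ _ _ _ => Iff.rfl⟩

lemma trans (hMN : BILElemSub Θ M N) (hNK : BILElemSub Θ N K) : BILElemSub Θ M K :=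
  ⟨hMN.1.trans hNK.1, fun w hw φ hφ => (hMN.2 w hw φ hφ).trans (hNK.2 w (hMN.1.1 hw) φ hφ)⟩

lemma of_chain {Mc : ℕ → SKModel A Ω} (hchain : ∀ n, BILElemSub Θ (Mc n) (Mc (n + 1)))
    {m n : ℕ} (hmn : m ≤ n) : BILElemSub Θ (Mc m) (Mc n) := by
  induction n, hmn using Nat.le_induction with
  | base => exact refl _
  | succ n _ ih => exact ih.trans (hchain n)

end BILElemSub

namespace IsUnionOfChain

variable {A Ω : Type} {Mc : ℕ → SKModel A Ω} {U : SKModel A Ω}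

lemma exists_rel_of_le (hchain : ∀ n, Submodel (Mc n) (Mc (n + 1)))
    (hU : IsUnionOfChain Mc U) {u v : Ω} (huv : U.rel u v) (n : ℕ) :
    ∃ m, n ≤ m ∧ (Mc m).rel u v := by
  obtain ⟨k, hk⟩ := (hU.2.1 u v).mp huv
  exact ⟨max k n, le_max_right k n, (Submodel.of_chain hchain (le_max_left k n)).rel_of_rel hk⟩

lemma submodel (hchain : ∀ n, Submodel (Mc n) (Mc (n + 1)))
    (hU : IsUnionOfChain Mc U) (n : ℕ) : Submodel (Mc n) U := by
  refine ⟨hU.1 ▸ Set.subset_iUnion (fun k => (Mc k).dom) n, fun u hu v hv => ⟨?_, ?_⟩,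
    fun p => ?_⟩
  · exact fun huv => (hU.2.1 u v).mpr ⟨n, huv⟩
  · intro huv
    obtain ⟨m, hnm, hm⟩ := hU.exists_rel_of_le hchain huv n
    exact ((Submodel.of_chain hchain hnm).2.1 u hu v hv).mpr hm
  · ext w
    rw [hU.2.2 p, Set.mem_inter_iff, Set.mem_iUnion]
    refine ⟨fun hw => ⟨⟨n, hw⟩, (Mc n).val_mem p hw⟩, fun ⟨⟨k, hk⟩, hw⟩ => ?_⟩
    have hwk := (Mc k).val_mem p hk
    rw [(Submodel.of_chain hchain (le_max_right k n)).mem_val_iff hw,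
      ← (Submodel.of_chain hchain (le_max_left k n)).mem_val_iff hwk]
    exact hk

lemma bilSat_iff {Θ : Set A} (hchain : ∀ n, BILElemSub Θ (Mc n) (Mc (n + 1)))
    (hU : IsUnionOfChain Mc U) {φ : BILForm A} (hφ : φ.letters ⊆ Θ) {n : ℕ} {w : Ω}
    (hw : w ∈ (Mc n).dom) : BILSat (Mc n) φ w ↔ BILSat U φ w := by
  have hsub : ∀ n, Submodel (Mc n) (Mc (n + 1)) := fun n => (hchain n).1
  induction φ generalizing n w with
  | bot => exact Iff.rfl
  | atom p => exact (hU.submodel hsub n).mem_val_iff hw p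
  | conj φ ψ ihφ ihψ =>
    obtain ⟨hφ', hψ'⟩ := Set.union_subset_iff.mp hφ
    exact and_congr (ihφ hφ' hw) (ihψ hψ' hw)
  | disj φ ψ ihφ ihψ =>
    obtain ⟨hφ', hψ'⟩ := Set.union_subset_iff.mp hφ
    exact or_congr (ihφ hφ' hw) (ihψ hψ' hw)
  | impl φ ψ ihφ ihψ =>
    obtain ⟨hφ', hψ'⟩ := Set.union_subset_iff.mp hφ
    constructor
    · intro h v hwv hv
      obtain ⟨m, hnm, hm⟩ := hU.exists_rel_of_le hsub hwv n
      have hvm := ((Mc m).rel_mem hm).2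
      have hm_sat := ((BILElemSub.of_chain hchain hnm).2 w hw _ hφ).mp h
      exact (ihψ hψ' hvm).mp (hm_sat v hm ((ihφ hφ' hvm).mpr hv))
    · intro h v hwv hv
      have hvn := ((Mc n).rel_mem hwv).2
      exact (ihψ hψ' hvn).mpr
        (h v ((hU.submodel hsub n).rel_of_rel hwv) ((ihφ hφ' hvn).mp hv))
  | coimpl φ ψ ihφ ihψ =>
    obtain ⟨hφ', hψ'⟩ := Set.union_subset_iff.mp hφ
    constructor
    · rintro ⟨v, hvw, hv, hnv⟩
      have hvn := ((Mc n).rel_mem hvw).1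
      exact ⟨v, (hU.submodel hsub n).rel_of_rel hvw, (ihφ hφ' hvn).mp hv,
        fun h => hnv ((ihψ hψ' hvn).mpr h)⟩
    · rintro ⟨v, hvw, hv, hnv⟩
      obtain ⟨m, hnm, hm⟩ := hU.exists_rel_of_le hsub hvw n
      have hvm := ((Mc m).rel_mem hm).1
      refine ((BILElemSub.of_chain hchain hnm).2 w hw _ hφ).mpr ⟨v, hm, ?_, ?_⟩
      · exact (ihφ hφ' hvm).mpr hv
      · exact fun h => hnv ((ihψ hψ' hvm).mp h)

end IsUnionOfChain

/-- BIL has the Tarski Union Property: if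
`M₀ ≼_BIL M₁ ≼_BIL …` is a countable BIL-elementary chain of `Θ`-models and
`U` is its union, then `Mₙ ≼_BIL U` for all `n`; in particular every
`BIL(Θ)`-formula has the same truth value at `(Mₙ,w)` and `(U,w)` for every
`w ∈ Wₙ`. -/
theorem bil_tup (A : Type) (Θ : Set A) (Ω : Type) (Mc : ℕ → SKModel A Ω)
    (hchain : ∀ n, BILElemSub Θ (Mc n) (Mc (n + 1)))
    (U : SKModel A Ω) (hU : IsUnionOfChain Mc U) :
    ∀ n, BILElemSub Θ (Mc n) U ∧
      ∀ w ∈ (Mc n).dom, ∀ φ : BILForm A, φ.letters ⊆ Θ →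
        (BILSat (Mc n) φ w ↔ BILSat U φ w) := by
  intro n
  have hsat : ∀ w ∈ (Mc n).dom, ∀ φ : BILForm A, φ.letters ⊆ Θ →
      (BILSat (Mc n) φ w ↔ BILSat U φ w) :=
    fun w hw φ hφ => hU.bilSat_iff hchain hφ hw
  exact ⟨⟨hU.submodel (fun k => (hchain k).1) n, hsat⟩, hsat⟩
end

section
/- BIL is ★-compact: for any signature Θ, a BIL(Θ)-theory (Γ,Δ) is BIL-satisfiable provided every finite subtheory is, i.e. if for all finite Γ' ⊆ Γ and Δ' ⊆ Δ there is a pointed Θ-model at which every formula of Γ' is true and every formula of Δ' is false, then there is a pointed Θ-model at which every formula of Γ is true and every formula of Δ is false. -/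
/-! Compactness via ultraproducts. Choose a pointed model for every finite subtheory and take
their ultraproduct along an ultrafilter refining the filter of cofinal finite subtheories. Łoś's
theorem holds for BIL: the clauses for `→` and `≪` quantify over worlds related by the order, and
since the order of the product is the pointwise order modulo the ultrafilter, a witness in the
product is the same as a family of witnesses in almost all factors. Each formula of `(Γ, Δ)` has
the required truth value in almost all factors, hence in the product. -/

namespace Filter.Product

variable {I : Type*} {l : Filter I} {Ω : I → Type*}

theorem exists_coe {p : l.Product Ω → Prop} : (∃ x, p x) ↔ ∃ f : ∀ i, Ω i, p f :=
  Quotient.exists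

variable (l) in
def LiftPred (p : ∀ i, Ω i → Prop) : l.Product Ω → Prop :=
  Quotient.lift (fun f => ∀ᶠ i in l, p i (f i)) fun _ _ h =>
    propext <| eventually_congr <| h.mono fun _ hi => hi ▸ Iff.rfl

variable (l) in
def LiftRel (r : ∀ i, Ω i → Ω i → Prop) : l.Product Ω → l.Product Ω → Prop :=
  Quotient.lift₂ (fun f g => ∀ᶠ i in l, r i (f i) (g i)) fun _ _ _ _ hf hg =>
    propext <| eventually_congr <| (hf.and hg).mono fun _ ⟨hfi, hgi⟩ => hfi ▸ hgi ▸ Iff.rfl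

end Filter.Product

open Filter Filter.Product

namespace SKModel

variable {A I : Type} {Ω : I → Type}

def filterProduct (l : Filter I) (M : ∀ i, SKModel A (Ω i)) : SKModel A (l.Product Ω) where
  dom := LiftPred l fun i v => v ∈ (M i).dom
  nonempty := ⟨↑fun i => (M i).nonempty.some, .of_forall fun i => (M i).nonempty.some_mem⟩
  rel := LiftRel l fun i => (M i).rel
  rel_mem {u v} := Quotient.inductionOn₂ u v fun _ _ h =>
    ⟨h.mono fun i hi => ((M i).rel_mem hi).1, h.mono fun i hi => ((M i).rel_mem hi).2⟩
  rel_refl u := Quotient.inductionOn u fun _ h => h.mono fun i hi => (M i).rel_refl _ hi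
  rel_trans {u v w} := Quotient.inductionOn₃ u v w fun _ _ _ huv hvw =>
    (huv.and hvw).mono fun i hi => (M i).rel_trans hi.1 hi.2
  rel_antisymm {u v} := Quotient.inductionOn₂ u v fun _ _ huv hvu =>
    Quotient.sound <| (huv.and hvu).mono fun i hi => (M i).rel_antisymm hi.1 hi.2
  val p := LiftPred l fun i v => v ∈ (M i).val p
  val_mem p u := Quotient.inductionOn u fun _ h => h.mono fun i hi => (M i).val_mem p hi
  val_mono p {u v} := Quotient.inductionOn₂ u v fun _ _ huv hu =>
    (huv.and hu).mono fun i hi => (M i).val_mono p hi.1 hi.2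

@[simp]
theorem rel_filterProduct_coe {l : Filter I} {M : ∀ i, SKModel A (Ω i)} {f g : ∀ i, Ω i} :
    (filterProduct l M).rel f g ↔ ∀ᶠ i in l, (M i).rel (f i) (g i) :=
  Iff.rfl

theorem bilSat_filterProduct_coe (U : Ultrafilter I) (M : ∀ i, SKModel A (Ω i))
    (φ : BILForm A) (f : ∀ i, Ω i) :
    BILSat (filterProduct (U : Filter I) M) φ f ↔ ∀ᶠ i in U, BILSat (M i) φ (f i) := by
  have : ∀ i, Nonempty (Ω i) := fun i => ⟨f i⟩
  induction φ generalizing f with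
  | bot => simpa [BILSat] using U.neBot.ne
  | atom p => rfl
  | conj φ ψ ihφ ihψ => simp only [BILSat, ihφ, ihψ, eventually_and]
  | disj φ ψ ihφ ihψ => simp only [BILSat, ihφ, ihψ, Ultrafilter.eventually_or]
  | impl φ ψ ihφ ihψ =>
    rw [← not_iff_not]
    simp only [BILSat, not_forall, exists_prop, exists_coe, rel_filterProduct_coe, ihφ, ihψ,
      ← Ultrafilter.eventually_not, ← eventually_and, skolem]
  | coimpl φ ψ ihφ ihψ =>
    simp only [BILSat, exists_coe, rel_filterProduct_coe, ihφ, ihψ,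
      ← Ultrafilter.eventually_not, ← eventually_and, skolem]

theorem bilSatTh_filterProduct_coe_iff (U : Ultrafilter I) (M : ∀ i, SKModel A (Ω i))
    (f : ∀ i, Ω i) (Γ Δ : Set (BILForm A)) :
    BILSatTh (filterProduct (U : Filter I) M) f Γ Δ ↔
      (∀ φ ∈ Γ, ∀ᶠ i in U, BILSat (M i) φ (f i)) ∧
        ∀ φ ∈ Δ, ∀ᶠ i in U, ¬ BILSat (M i) φ (f i) := by
  simp only [BILSatTh, bilSat_filterProduct_coe, Ultrafilter.eventually_not]

end SKModel

open Finset in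
theorem bil_star_compactness_general (A : Type) (Γ Δ : Set (BILForm A))
    (hfin : ∀ Γ' ⊆ Γ, ∀ Δ' ⊆ Δ, Γ'.Finite → Δ'.Finite →
      ∃ (Ω : Type) (M : SKModel A Ω) (w : Ω), w ∈ M.dom ∧ BILSatTh M w Γ' Δ') :
    ∃ (Ω : Type) (M : SKModel A Ω) (w : Ω), w ∈ M.dom ∧ BILSatTh M w Γ Δ := by
  classical
  choose Ω M w hw hsat using fun i : Finset Γ × Finset Δ =>
    hfin _ (Subtype.coe_image_subset Γ i.1) _ (Subtype.coe_image_subset Δ i.2)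
      (i.1.finite_toSet.image _) (i.2.finite_toSet.image _)
  let U := Ultrafilter.of (atTop : Filter (Finset Γ × Finset Δ))
  refine ⟨_, SKModel.filterProduct (U : Filter _) M, w, .of_forall hw,
    (SKModel.bilSatTh_filterProduct_coe_iff U M w Γ Δ).2 ⟨fun φ hφ => ?_, fun φ hφ => ?_⟩⟩
  · refine Ultrafilter.of_le _ <| (eventually_ge_atTop ({⟨φ, hφ⟩}, ∅)).mono fun i hi => ?_
    exact (hsat i).1 φ ⟨⟨φ, hφ⟩, hi.1 (mem_singleton_self _), rfl⟩
  · refine Ultrafilter.of_le _ <| (eventually_ge_atTop (∅, {⟨φ, hφ⟩})).mono fun i hi => ?_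
    exact (hsat i).2 φ ⟨⟨φ, hφ⟩, hi.2 (mem_singleton_self _), rfl⟩

/-- BIL is ★-compact: a `BIL(Θ)`-theory `(Γ,Δ)` is
BIL-satisfiable provided all its finite subtheories are. -/
theorem bil_star_compactness (A : Type) (Θ : Set A) (Γ Δ : Set (BILForm A))
    (hΓ : ∀ φ ∈ Γ, BILForm.letters φ ⊆ Θ) (hΔ : ∀ φ ∈ Δ, BILForm.letters φ ⊆ Θ)
    (hfin : ∀ Γ' ⊆ Γ, ∀ Δ' ⊆ Δ, Γ'.Finite → Δ'.Finite →
      ∃ (Ω : Type) (M : SKModel A Ω) (w : Ω), w ∈ M.dom ∧ BILSatTh M w Γ' Δ') :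
    ∃ (Ω : Type) (M : SKModel A Ω) (w : Ω), w ∈ M.dom ∧ BILSatTh M w Γ Δ :=
  bil_star_compactness_general A Γ Δ hfin
end
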